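/- Let q ≥ 2 be an integer and let f : ℕ → ℂ be a strongly q-multiplicative sequence with |f(n)| = 1 for all n. Then either there exists an integer p with 0 ≤ p < q−1 such that f(n) = e(n·p/(q−1)) for all n ∈ ℕ, or there exist constants c > 0 and C > 0 such that for every integer N ≥ 1, sup_{α ∈ ℝ} |∑_{n=0}^{N−1} f(n) e(nα)| ≤ C·N^{1−c}. -/

import Mathlib

open Finset Complex

noncomputable section

/-- A sequence is `q`-multiplicative if `f (m + n) = f m * f n` whenever
`m < q ^ t` and `q ^ t ∣ n`. -/
def QMult (q : ℕ) (f : ℕ → ℂ) : Prop :=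
  ∀ t m n : ℕ, m < q ^ t → q ^ t ∣ n → f (m + n) = f m * f n

/-- `e x = exp (2 π i x)`. -/
def e (x : ℝ) : ℂ := Complex.exp (2 * Real.pi * Complex.I * x)

/-- The weight `|ω|` of `ω ∈ {0,1}^s`: the number of coordinates equal to `1`. -/
def wt {s : ℕ} (ω : Fin s → Bool) : ℕ := (Finset.univ.filter fun i => ω i = true).card

/-- The vertex `n₀ + ω₁ n₁ + ⋯ + ω_s n_s` of a parallelepiped. -/
def vertex (s : ℕ) (n : Fin (s + 1) → ℤ) (ω : Fin s → Bool) : ℤ :=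
  n 0 + ∑ i : Fin s, if ω i then n i.succ else 0

/-- The set `Π_s(N)` of (s+1)-tuples all of whose associated vertices lie in `[0, N)`.
(Any such tuple automatically has all entries in `[-N, N]`.) -/
def PiSet (s N : ℕ) : Finset (Fin (s + 1) → ℤ) :=
  (Finset.Icc (fun _ => -(N : ℤ)) fun _ => (N : ℤ)).filter fun n =>
    ∀ ω : Fin s → Bool, 0 ≤ vertex s n ω ∧ vertex s n ω < N

/-- The Gowers product `∏_ω conj^{|ω|} f(n₀ + ω·n)`. -/
def gowersTerm (s : ℕ) (f : ℕ → ℂ) (n : Fin (s + 1) → ℤ) : ℂ :=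
  ∏ ω : Fin s → Bool, (starRingEnd ℂ)^[wt ω] (f (vertex s n ω).toNat)

/-- The Gowers average `‖f‖_{U^s[N]}^{2^s}` (as a complex number; it is in fact
real and nonnegative). -/
def gowersAvg (s N : ℕ) (f : ℕ → ℂ) : ℂ :=
  (∑ n ∈ PiSet s N, gowersTerm s f n) / (PiSet s N).card

/-- The Gowers uniformity norm `‖f‖_{U^s[N]}`. -/
def gowersNorm (s N : ℕ) (f : ℕ → ℂ) : ℝ :=
  (gowersAvg s N f).re ^ ((1 : ℝ) / 2 ^ s)

/-- Sum of digits of `n` in base `q`. -/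
def digitSum (q n : ℕ) : ℕ := (Nat.digits q n).sum

end

/-!
Write `S_N(β) = ∑_{n<N} f(n) e(nβ)` and `g = S_q`. Splitting off the last digit,
`f(qm + a) = f(a) f(m)`, gives `S_N(β) = g(β) S_{⌊N/q⌋}(qβ)` up to an error of at most `q - 1`;
two such steps shrink `N` to `⌊N/q²⌋` at the cost of the factor `|g(β)| |g(qβ)| ≤ q²`, a continuous
`1`-periodic function of `β`. If its maximum is smaller than `q²`, iterating yields a power saving.
If the maximum `q²` is attained at `α`, the triangle inequality is an equality in `g(α)` and in
`g(qα)`, so `f(a) e(aα) = 1 = f(a) e(aqα)` for every digit `a`; hence `(q - 1)α ∈ ℤ`, and by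
multiplicativity `f(n) = e(-nα)` for every `n`.
-/

lemma e_add (x y : ℝ) : e (x + y) = e x * e y := by
  simp only [e, ← Complex.exp_add]
  congr 1
  push_cast
  ring

lemma norm_e (x : ℝ) : ‖e x‖ = 1 := by
  rw [e, show 2 * (Real.pi : ℂ) * I * x = ((2 * Real.pi * x : ℝ) : ℂ) * I by push_cast; ring,
    norm_exp_ofReal_mul_I]

lemma e_ne_zero (x : ℝ) : e x ≠ 0 := exp_ne_zero _

lemma e_zero : e 0 = 1 := by simp [e]

lemma e_eq_one_iff (x : ℝ) : e x = 1 ↔ ∃ k : ℤ, x = k := by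
  rw [e, exp_eq_one_iff]
  refine exists_congr fun k => ⟨fun h => ?_, fun h => by rw [h]; push_cast; ring⟩
  exact_mod_cast mul_left_cancel₀ two_pi_I_ne_zero (h.trans (mul_comm _ _))

lemma e_intCast (k : ℤ) : e k = 1 := (e_eq_one_iff _).2 ⟨k, rfl⟩

lemma continuous_e : Continuous e :=
  continuous_exp.comp (continuous_const.mul continuous_ofReal)

lemma eq_of_norm_sum_eq_card {ι : Type*} {s : Finset ι} {z : ι → ℂ} (hz : ∀ i ∈ s, ‖z i‖ ≤ 1)
    (hsum : ‖∑ i ∈ s, z i‖ = #s) {i j : ι} (hi : i ∈ s) (hj : j ∈ s) : z i = z j := by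
  set S := ∑ i ∈ s, z i
  have hS : (‖S‖ : ℂ) ≠ 0 := by
    rw [hsum]; exact_mod_cast (card_pos.2 ⟨i, hi⟩).ne'
  set u := starRingEnd ℂ S / ‖S‖
  have hu : ‖u‖ = 1 := by
    rw [norm_div, norm_conj, norm_real, Real.norm_of_nonneg (norm_nonneg _),
      div_self (by exact_mod_cast hS)]
  have hle : ∀ k ∈ s, (u * z k).re ≤ 1 := fun k hk =>
    (re_le_norm _).trans (by rw [norm_mul, hu, one_mul]; exact hz k hk)
  have hre : ∀ k ∈ s, (u * z k).re = 1 := by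
    refine (sum_eq_sum_iff_of_le hle).1 ?_
    rw [← re_sum, ← mul_sum, div_mul_eq_mul_div, conj_mul', sq, mul_div_cancel_right₀ _ hS,
      ofReal_re, hsum, sum_const, nsmul_one]
  have hone : ∀ k ∈ s, u * z k = 1 := by
    intro k hk
    have hnorm : ‖u * z k‖ ≤ 1 := by rw [norm_mul, hu, one_mul]; exact hz k hk
    have him : (u * z k).im = 0 :=
      abs_re_eq_norm.1 (le_antisymm (abs_re_le_norm _) (by rw [hre k hk, abs_one]; exact hnorm))
    exact Complex.ext (by simp [hre k hk]) (by simp [him])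
  have hu0 : u ≠ 0 := by rw [← norm_ne_zero_iff, hu]; exact one_ne_zero
  exact mul_left_cancel₀ hu0 ((hone i hi).trans (hone j hj).symm)

lemma QMult.map_zero {q : ℕ} {f : ℕ → ℂ} (hf : QMult q f) (h0 : f 0 ≠ 0) : f 0 = 1 := by
  have h := hf 0 0 0 (by simp) (dvd_zero _)
  rw [add_zero] at h
  exact (mul_eq_left₀ h0).1 h.symm

lemma QMult.map_mul_add {q : ℕ} {f : ℕ → ℂ} (hf : QMult q f) (hstrong : ∀ n, f (q * n) = f n)
    {a : ℕ} (ha : a < q) (m : ℕ) : f (q * m + a) = f a * f m := by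
  rw [add_comm, hf 1 a (q * m) (by rwa [pow_one]) (by rw [pow_one]; exact dvd_mul_right q m),
    hstrong]

noncomputable def expSum (f : ℕ → ℂ) (N : ℕ) (β : ℝ) : ℂ := ∑ n ∈ range N, f n * e (n * β)

lemma expSum_periodic (f : ℕ → ℂ) (N : ℕ) : Function.Periodic (expSum f N) 1 := by
  intro β
  refine sum_congr rfl fun n _ => ?_
  rw [mul_add, mul_one, e_add, ← Int.cast_natCast, e_intCast, mul_one]

lemma continuous_expSum (f : ℕ → ℂ) (N : ℕ) : Continuous (expSum f N) :=
  continuous_finsetSum _ fun _ _ => continuous_const.mul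
    (continuous_e.comp (continuous_const.mul continuous_id))

section expSum

variable {f : ℕ → ℂ}

lemma norm_expSum_add_sub_le (hf : ∀ n, ‖f n‖ ≤ 1) (M k : ℕ) (β : ℝ) :
    ‖expSum f (M + k) β - expSum f M β‖ ≤ k := by
  rw [expSum, expSum, sum_range_add, add_sub_cancel_left]
  calc ‖∑ i ∈ range k, f (M + i) * e ((M + i : ℕ) * β)‖
      ≤ ∑ i ∈ range k, ‖f (M + i) * e ((M + i : ℕ) * β)‖ := norm_sum_le _ _
    _ ≤ ∑ _i ∈ range k, (1 : ℝ) := sum_le_sum fun i _ => by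
        rw [norm_mul, norm_e, mul_one]; exact hf _
    _ = k := by simp

lemma norm_expSum_le (hf : ∀ n, ‖f n‖ ≤ 1) (N : ℕ) (β : ℝ) : ‖expSum f N β‖ ≤ N := by
  simpa [expSum] using norm_expSum_add_sub_le hf 0 N β

lemma expSum_mul {q : ℕ} (hsplit : ∀ a < q, ∀ m, f (q * m + a) = f a * f m) (M : ℕ) (β : ℝ) :
    expSum f (q * M) β = expSum f q β * expSum f M (q * β) := by
  induction M with
  | zero => simp [expSum]
  | succ M ih =>
    simp only [expSum] at ih ⊢
    rw [Nat.mul_succ, sum_range_add, ih, sum_range_succ, mul_add]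
    congr 1
    rw [sum_mul]
    refine sum_congr rfl fun a ha => ?_
    rw [hsplit a (mem_range.1 ha), show ((q * M + a : ℕ) : ℝ) * β = a * β + M * (q * β) by
      push_cast; ring, e_add]
    ring

lemma norm_expSum_le_mul_add {q : ℕ} (hq : 0 < q)
    (hsplit : ∀ a < q, ∀ m, f (q * m + a) = f a * f m) (hf : ∀ n, ‖f n‖ ≤ 1) (N : ℕ) (β : ℝ) :
    ‖expSum f N β‖ ≤ ‖expSum f q β‖ * ‖expSum f (N / q) (q * β)‖ + (q - 1) := by
  have htail : ‖expSum f N β - expSum f (q * (N / q)) β‖ ≤ q - 1 := by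
    have hr : ((N % q : ℕ) : ℝ) ≤ q - 1 := by
      rw [le_sub_iff_add_le]; exact_mod_cast Nat.mod_lt N hq
    have h := norm_expSum_add_sub_le hf (q * (N / q)) (N % q) β
    rw [Nat.div_add_mod] at h
    exact h.trans hr
  rw [← norm_mul, ← expSum_mul hsplit]
  exact (norm_le_norm_add_norm_sub' _ _).trans (by gcongr)

lemma norm_expSum_le_mul_mul_add {q : ℕ} (hq : 0 < q)
    (hsplit : ∀ a < q, ∀ m, f (q * m + a) = f a * f m) (hf : ∀ n, ‖f n‖ ≤ 1) (N : ℕ) (β : ℝ) :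
    ‖expSum f N β‖ ≤ ‖expSum f q β‖ * ‖expSum f q (q * β)‖ *
      ‖expSum f (N / q ^ 2) ((q : ℝ) ^ 2 * β)‖ + ((q : ℝ) ^ 2 - 1) := by
  have h₁ := norm_expSum_le_mul_add hq hsplit hf N β
  have h₂ := norm_expSum_le_mul_add hq hsplit hf (N / q) (q * β)
  have hg := norm_expSum_le hf q β
  rw [Nat.div_div_eq_div_mul, ← sq, ← mul_assoc, ← sq] at h₂
  have hq1 : (0 : ℝ) ≤ q - 1 := by rw [sub_nonneg]; exact_mod_cast hq
  calc ‖expSum f N β‖ ≤ ‖expSum f q β‖ * (‖expSum f q (q * β)‖ *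
        ‖expSum f (N / q ^ 2) ((q : ℝ) ^ 2 * β)‖ + (q - 1)) + (q - 1) := by
        grw [h₁, h₂]
    _ ≤ ‖expSum f q β‖ * ‖expSum f q (q * β)‖ *
        ‖expSum f (N / q ^ 2) ((q : ℝ) ^ 2 * β)‖ + q * (q - 1) + (q - 1) := by
        rw [mul_add, ← mul_assoc]; gcongr
    _ = _ := by ring

end expSum

lemma exists_rpow_bound_of_le_mul_div_add {ι : Type*} {F : ℕ → ι → ℝ} {T : ι → ι} {B : ℕ}
    {θ K : ℝ} (hB : 2 ≤ B) (hθ : 0 ≤ θ) (hθB : θ < B) (hK : 0 ≤ K) (h0 : ∀ x, F 0 x = 0)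
    (hrec : ∀ N x, F N x ≤ θ * F (N / B) (T x) + K) :
    ∃ c > (0 : ℝ), ∃ C > (0 : ℝ), ∀ N : ℕ, 1 ≤ N → ∀ x, F N x ≤ C * (N : ℝ) ^ ((1 : ℝ) - c) := by
  -- the exponent `γ = 1 - c` is chosen with `B ^ γ = λ` for some `λ` strictly between `θ` and `B`
  have hB' : (2 : ℝ) ≤ B := by exact_mod_cast hB
  set lam := (θ + B) / 2
  have hθlam : θ < lam := by simp only [lam]; linarith
  set γ := Real.logb B lam
  have hγ0 : 0 ≤ γ := Real.logb_nonneg (by linarith) (by simp only [lam]; linarith)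
  have hγ1 : γ < 1 := by
    rw [Real.logb_lt_iff_lt_rpow (by linarith) (by linarith), Real.rpow_one]
    simp only [lam]; linarith
  have hBγ : (B : ℝ) ^ γ = lam := Real.rpow_logb (by linarith) (by linarith) (by linarith)
  set C := (K + 1) * lam / (lam - θ)
  have hC : 0 < C := div_pos (by positivity) (by linarith)
  have hCθ : θ * C / lam = C - (K + 1) := by
    simp only [C]; field_simp [(by linarith : lam - θ ≠ 0), (by linarith : lam ≠ 0)]; ring
  refine ⟨1 - γ, by linarith, C, hC, ?_⟩
  rw [sub_sub_cancel]
  intro N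
  induction N using Nat.strong_induction_on with
  | _ N ih =>
    intro hN x
    have hNγ : 1 ≤ (N : ℝ) ^ γ := Real.one_le_rpow (by exact_mod_cast hN) hγ0
    have hdiv : F (N / B) (T x) ≤ C * (N : ℝ) ^ γ / lam := by
      rcases Nat.eq_zero_or_pos (N / B) with h | h
      · rw [h, h0]; positivity
      calc F (N / B) (T x) ≤ C * ((N / B : ℕ) : ℝ) ^ γ := ih _ (Nat.div_lt_self hN (by omega)) h _
        _ ≤ C * ((N : ℝ) / B) ^ γ := by gcongr; exact Nat.cast_div_le
        _ = C * (N : ℝ) ^ γ / lam := by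
          rw [Real.div_rpow (by positivity) (by positivity), hBγ, mul_div_assoc]
    calc F N x ≤ θ * F (N / B) (T x) + K := hrec N x
      _ ≤ θ * (C * (N : ℝ) ^ γ / lam) + K := by gcongr
      _ = (C - (K + 1)) * (N : ℝ) ^ γ + K := by rw [← hCθ]; ring
      _ ≤ C * (N : ℝ) ^ γ := by nlinarith

lemma Function.Periodic.exists_forall_ge {α : Type*} [LinearOrder α] [TopologicalSpace α]
    [ClosedIciTopology α] {h : ℝ → α} {c : ℝ} (hp : Function.Periodic h c) (hc : c ≠ 0)
    (hh : Continuous h) : ∃ x₀, ∀ x, h x ≤ h x₀ := by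
  obtain ⟨_, ⟨x₀, rfl⟩, hmax⟩ := (hp.compact_of_continuous hc hh).exists_isGreatest
    (Set.range_nonempty h)
  exact ⟨x₀, fun x => hmax ⟨x, rfl⟩⟩

lemma exists_forall_norm_expSum_mul_le (f : ℕ → ℂ) (q : ℕ) : ∃ α₀, ∀ β,
    ‖expSum f q β‖ * ‖expSum f q (q * β)‖ ≤ ‖expSum f q α₀‖ * ‖expSum f q (q * α₀)‖ := by
  refine Function.Periodic.exists_forall_ge (fun β => ?_) one_ne_zero
    ((continuous_expSum f q).norm.mul
      ((continuous_expSum f q).comp (continuous_const.mul continuous_id)).norm)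
  rw [mul_add, expSum_periodic f q β, (expSum_periodic f q).nat_mul q (q * β)]

lemma mul_e_eq_one_of_norm_expSum_eq {q : ℕ} {f : ℕ → ℂ} (hq : 0 < q) (hf0 : f 0 = 1)
    (hmod : ∀ n, ‖f n‖ = 1) {β : ℝ} (h : ‖expSum f q β‖ = q) {a : ℕ} (ha : a < q) :
    f a * e (a * β) = 1 := by
  have hz : ∀ a ∈ range q, ‖f a * e (a * β)‖ ≤ 1 := fun a _ => by
    rw [norm_mul, hmod, norm_e, one_mul]
  refine (eq_of_norm_sum_eq_card hz (by rwa [card_range]) (mem_range.2 ha)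
    (mem_range.2 hq)).trans ?_
  simp [hf0, e_zero]

lemma mul_e_eq_one_of_digits {q : ℕ} {f : ℕ → ℂ} (hq : 2 ≤ q)
    (hsplit : ∀ a < q, ∀ m, f (q * m + a) = f a * f m) {α : ℝ} {k : ℤ} (hα : ((q : ℝ) - 1) * α = k)
    (hdigit : ∀ a < q, f a * e (a * α) = 1) (n : ℕ) : f n * e (n * α) = 1 := by
  induction n using Nat.strong_induction_on with
  | _ n ih =>
    rcases lt_or_ge n q with hn | hn
    · exact hdigit n hn
    obtain ⟨j, r, hr, rfl, hj⟩ : ∃ j r, r < q ∧ n = q * j + r ∧ j < n :=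
      ⟨n / q, n % q, Nat.mod_lt _ (by omega), (Nat.div_add_mod n q).symm,
        Nat.div_lt_self (by omega) (by omega)⟩
    have hphase : ((q * j + r : ℕ) : ℝ) * α = r * α + j * α + ((j * k : ℤ) : ℝ) := by
      push_cast; rw [← hα]; ring
    rw [hsplit r hr, hphase, e_add, e_add, e_intCast]
    linear_combination (f j * e (j * α)) * hdigit r hr + ih j hj

lemma exists_nat_lt_e_mul_e_eq_one {q : ℕ} (hq : 2 ≤ q) {α : ℝ} {k : ℤ}
    (hα : ((q : ℝ) - 1) * α = k) :
    ∃ p : ℕ, p < q - 1 ∧ ∀ n : ℕ, e (n * p / ((q : ℝ) - 1)) * e (n * α) = 1 := by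
  have hq1 : (0 : ℤ) < q - 1 := by omega
  set p := ((-k) % (q - 1 : ℤ)).toNat
  set m := (-k) / (q - 1 : ℤ)
  have hp : (p : ℤ) = (-k) % (q - 1 : ℤ) := Int.toNat_of_nonneg (Int.emod_nonneg _ hq1.ne')
  have hpk : (p : ℝ) + k = -(((q : ℝ) - 1) * m) := by
    have h : (p : ℤ) + k = -((q - 1) * m) := by linarith [Int.emod_add_mul_ediv (-k) (q - 1)]
    exact_mod_cast h
  refine ⟨p, by have := Int.emod_lt_of_pos (-k) hq1; omega, fun n => ?_⟩
  have hq1R : (q : ℝ) - 1 ≠ 0 := by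
    have : (2 : ℝ) ≤ q := by exact_mod_cast hq
    linarith
  rw [← e_add, show (n : ℝ) * p / ((q : ℝ) - 1) + n * α = ((-(n * m) : ℤ) : ℝ) by
    field_simp; push_cast; linear_combination n * hpk + n * hα]
  exact e_intCast _

lemma exists_phase_of_norm_expSum_eq {q : ℕ} {f : ℕ → ℂ} (hq : 2 ≤ q) (hf0 : f 0 = 1)
    (hsplit : ∀ a < q, ∀ m, f (q * m + a) = f a * f m) (hmod : ∀ n, ‖f n‖ = 1) {α : ℝ}
    (h₁ : ‖expSum f q α‖ = q) (h₂ : ‖expSum f q (q * α)‖ = q) :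
    ∃ p : ℕ, p < q - 1 ∧ ∀ n : ℕ, f n = e (n * p / ((q : ℝ) - 1)) := by
  have hdigit a (ha : a < q) := mul_e_eq_one_of_norm_expSum_eq (by omega) hf0 hmod h₁ ha
  -- the digit `1` sees both `α` and `q α`, which forces `e ((q - 1) α) = 1`
  have hperiod : e (((q : ℝ) - 1) * α) = 1 := by
    have h₁' := hdigit 1 (by omega)
    have h₂' := mul_e_eq_one_of_norm_expSum_eq (by omega) hf0 hmod h₂ (a := 1) (by omega)
    rw [Nat.cast_one, one_mul] at h₁' h₂'
    rw [show (q : ℝ) * α = (q - 1) * α + α by ring, e_add] at h₂'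
    linear_combination h₂' - e (((q : ℝ) - 1) * α) * h₁'
  obtain ⟨k, hk⟩ := (e_eq_one_iff _).1 hperiod
  obtain ⟨p, hp, hpn⟩ := exists_nat_lt_e_mul_e_eq_one hq hk
  refine ⟨p, hp, fun n => mul_right_cancel₀ (e_ne_zero (n * α)) ?_⟩
  rw [mul_e_eq_one_of_digits hq hsplit hk hdigit n, hpn n]

/-- A strongly `q`-multiplicative sequence is either a periodic
linear phase `e(np/(q-1))` or of Gelfond type of order 1. -/
theorem stmt15 (q : ℕ) (hq : 2 ≤ q) (f : ℕ → ℂ) (hf : QMult q f)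
    (hstrong : ∀ n : ℕ, f (q * n) = f n) (hmod : ∀ n, ‖f n‖ = 1) :
    (∃ p : ℕ, p < q - 1 ∧ ∀ n : ℕ, f n = e ((n : ℝ) * p / ((q : ℝ) - 1))) ∨
    ∃ c > (0 : ℝ), ∃ C > (0 : ℝ), ∀ N : ℕ, 1 ≤ N → ∀ α : ℝ,
      ‖∑ n ∈ Finset.range N, f n * e (n * α)‖ ≤ C * (N : ℝ) ^ ((1 : ℝ) - c) := by
  have hf0 : f 0 = 1 := hf.map_zero (by rw [← norm_ne_zero_iff, hmod]; exact one_ne_zero)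
  have hsplit : ∀ a < q, ∀ m, f (q * m + a) = f a * f m := fun a ha => hf.map_mul_add hstrong ha
  have hf1 n : ‖f n‖ ≤ 1 := (hmod n).le
  have hg β : ‖expSum f q β‖ ≤ q := norm_expSum_le hf1 q β
  have hq2 : (2 : ℝ) ≤ q := by exact_mod_cast hq
  obtain ⟨α₀, hα₀⟩ := exists_forall_norm_expSum_mul_le f q
  rcases (mul_le_mul (hg α₀) (hg (q * α₀)) (norm_nonneg _) (by positivity)).lt_or_eq with hlt | heq
  · right
    refine exists_rpow_bound_of_le_mul_div_add (F := fun N β => ‖expSum f N β‖)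
      (T := fun β => (q : ℝ) ^ 2 * β) (B := q ^ 2)
      (θ := ‖expSum f q α₀‖ * ‖expSum f q (q * α₀)‖) (K := (q : ℝ) ^ 2 - 1) (by nlinarith)
      (by positivity) (by push_cast; nlinarith) (by nlinarith) (fun _ => by simp [expSum])
      fun N β => (norm_expSum_le_mul_mul_add (by omega) hsplit hf1 N β).trans ?_
    gcongr ?_ * _ + _
    exact hα₀ β
  · left
    refine exists_phase_of_norm_expSum_eq hq hf0 hsplit hmod (α := α₀) ?_ ?_ <;>
      nlinarith [hg α₀, hg (q * α₀), norm_nonneg (expSum f q α₀), norm_nonneg (expSum f q (q * α₀))]
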